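/- arXiv:2502.06489 — 6 statements merged into one kernel-verified Lean document; each statement's English description precedes it below -/
import Mathlib

section
/- Let v be a valuation profile in the one-sided matching setting (n agents, n items, nonnegative values) consistent with an ordinal profile σ, and let μ* be a matching maximizing SW(·|v) over all matchings. Then there exists a matching μ̂* that also maximizes SW(·|v) and in which some agent i is matched to her most-preferred item, i.e., v_i(μ̂*(i)) ≥ v_i(x) for every item x. -/
open Finset

/-- Social welfare of the matching `μ` (a bijection from agents to items) under `v`. -/
noncomputable def SWm {n : ℕ} (v : Fin n → Fin n → ℝ) (μ : Equiv.Perm (Fin n)) : ℝ :=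
  ∑ i, v i (μ i)

/-- `v` is a valuation profile with nonnegative values summing to `1` for each agent. -/
def UnitSum {n : ℕ} (v : Fin n → Fin n → ℝ) : Prop :=
  (∀ i x, 0 ≤ v i x) ∧ ∀ i, ∑ x, v i x = 1

/-- `σ i p` is the item ranked at position `p` by agent `i` (position `0` is the top);
`v` is consistent with `σ` if each agent's values are non-increasing along her ranking. -/
def Consistent {n : ℕ} (σ : Fin n → (Fin n ≃ Fin n)) (v : Fin n → Fin n → ℝ) : Prop :=
  ∀ i, ∀ p q : Fin n, p ≤ q → v i (σ i q) ≤ v i (σ i p)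

/-- Every optimal matching can be transformed into an optimal matching in which some agent
is matched to her most-preferred item. -/
theorem stmt11 {n : ℕ} (hn : 0 < n) (σ : Fin n → (Fin n ≃ Fin n))
    (v : Fin n → Fin n → ℝ) (hv : UnitSum v) (hc : Consistent σ v)
    (μstar : Equiv.Perm (Fin n)) (hopt : ∀ μ, SWm v μ ≤ SWm v μstar) :
    ∃ μhat : Equiv.Perm (Fin n),
      (∀ μ, SWm v μ ≤ SWm v μhat) ∧ ∃ i : Fin n, ∀ x : Fin n, v i x ≤ v i (μhat i) := by
  -- the top item of agent i
  set t : Fin n → Fin n := fun i => σ i ⟨0, hn⟩ with ht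
  have hmax : ∀ i x, v i x ≤ v i (t i) := by
    intro i x
    have hx : x = σ i ((σ i).symm x) := ((σ i).apply_symm_apply x).symm
    rw [hx]
    exact hc i ⟨0, hn⟩ ((σ i).symm x) (Fin.mk_le_of_le_val (Nat.zero_le _))
  by_contra hcon
  push_neg at hcon
  have hneg : ∀ i, v i (μstar i) < v i (t i) := by
    intro i
    obtain ⟨x, hx⟩ := hcon μstar hopt i
    exact lt_of_lt_of_le hx (hmax i x)
  -- the "follow your top item" map
  set f : Fin n → Fin n := fun i => μstar.symm (t i) with hf
  -- find a periodic point of f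
  obtain ⟨a, b, hab, he⟩ := Finite.exists_ne_map_eq_of_infinite (fun m : ℕ => f^[m] (⟨0, hn⟩ : Fin n))
  wlog hlt : a < b generalizing a b
  · exact this b a hab.symm he.symm (by omega)
  set y : Fin n := f^[a] (⟨0, hn⟩ : Fin n) with hy
  have hyper : Function.IsPeriodicPt f (b - a) y := by
    unfold Function.IsPeriodicPt Function.IsFixedPt
    rw [hy, ← Function.iterate_add_apply]
    rw [show b - a + a = b by omega]
    exact he.symm
  have hymem : y ∈ Function.periodicPts f :=
    Function.mk_mem_periodicPts (by omega) hyper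
  set k : ℕ := Function.minimalPeriod f y with hk
  have hkpos : 0 < k := Function.minimalPeriod_pos_of_mem_periodicPts hymem
  set l : List (Fin n) := (List.range k).map (fun m => f^[m] y) with hl
  have hlen : l.length = k := by simp [hl]
  have hnodup : l.Nodup := by
    have := Function.nodup_periodicOrbit (f := f) (x := y)
    rwa [Function.periodicOrbit_def, Cycle.nodup_coe_iff] at this
  set c : Equiv.Perm (Fin n) := l.formPerm with hcdef
  have hgetl : ∀ (m : ℕ) (hm : m < k), l[m]'(by omega) = f^[m] y := by
    intro m hm; simp [hl]
  have hmem_iff : ∀ z, z ∈ l ↔ ∃ m, m < k ∧ f^[m] y = z := by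
    intro z; simp [hl, List.mem_map]
    constructor
    · rintro ⟨m, hm, rfl⟩; exact ⟨m, hm, rfl⟩
    · rintro ⟨m, hm, rfl⟩; exact ⟨m, hm, rfl⟩
  have hcf : ∀ z ∈ l, c z = f z := by
    intro z hz
    obtain ⟨m, hm, rfl⟩ := (hmem_iff z).1 hz
    have h1 : c (l[m]'(by omega)) = l[(m+1) % l.length]'(Nat.mod_lt _ (by omega)) :=
      List.formPerm_apply_getElem l hnodup m (by omega)
    rw [hgetl m hm] at h1
    rw [h1]
    have h2 : (m + 1) % l.length < k := by rw [hlen]; exact Nat.mod_lt _ hkpos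
    rw [hgetl _ h2, hlen, hk, Function.iterate_mod_minimalPeriod_eq,
      Function.iterate_succ_apply']
  have hcid : ∀ z, z ∉ l → c z = z := fun z hz => List.formPerm_apply_of_notMem hz
  -- the rotated matching
  set μ' : Equiv.Perm (Fin n) := c.trans μstar with hμ'
  have hstrict : SWm v μstar < SWm v μ' := by
    unfold SWm
    apply Finset.sum_lt_sum
    · intro i _
      by_cases hi : i ∈ l
      · have : μ' i = t i := by
          simp only [hμ', Equiv.trans_apply, hcf i hi, hf]
          exact μstar.apply_symm_apply _
        rw [this]; exact le_of_lt (hneg i)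
      · have : μ' i = μstar i := by
          simp only [hμ', Equiv.trans_apply, hcid i hi]
        rw [this]
    · refine ⟨y, Finset.mem_univ y, ?_⟩
      have hyl : y ∈ l := (hmem_iff y).2 ⟨0, hkpos, rfl⟩
      have : μ' y = t y := by
        simp only [hμ', Equiv.trans_apply, hcf y hyl, hf]
        exact μstar.apply_symm_apply _
      rw [this]; exact hneg y
  exact absurd (hopt μ') (not_le.mpr hstrict)
end

section
/- Let n ≥ 1 and let v be a unit-sum valuation profile in the one-sided matching setting, consistent with an ordinal profile σ. Let μ be any matching in which some agent i is matched to her most-preferred item under σ. Then for every matching μ′: SW(μ′|v) ≤ n² · SW(μ|v). (Robustness bound of n² for any mechanism that outputs a predicted-welfare-maximizing matching in which some agent receives her top item; combined with consistency 1 when the prediction is accurate, this proves the full-prediction matching mechanism has consistency 1 and robustness at most n².) -/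
open Finset

/-- Robustness bound of `n²` for any matching in which some agent receives her
most-preferred item. -/
theorem stmt12 {n : ℕ} (hn : 1 ≤ n) (σ : Fin n → (Fin n ≃ Fin n))
    (v : Fin n → Fin n → ℝ) (hv : UnitSum v) (hc : Consistent σ v)
    (μ : Equiv.Perm (Fin n)) (hμ : ∃ i : Fin n, μ i = σ i ⟨0, hn⟩) :
    ∀ μ' : Equiv.Perm (Fin n), SWm v μ' ≤ (n : ℝ) ^ 2 * SWm v μ := by
  intro μ'
  obtain ⟨i, hi⟩ := hμ
  obtain ⟨hpos, hsum⟩ := hv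
  have hn' : (0:ℝ) < n := by exact_mod_cast hn
  -- top value ≥ 1/n : n * top ≥ sum of all values = 1
  have htop : 1 ≤ (n : ℝ) * v i (σ i ⟨0, hn⟩) := by
    have h1 : ∑ x, v i x = ∑ q, v i (σ i q) :=
      (Fintype.sum_equiv (σ i) _ _ (fun q => rfl)).symm
    have h2 : ∑ q : Fin n, v i (σ i q) ≤ ∑ _q : Fin n, v i (σ i ⟨0, hn⟩) :=
      Finset.sum_le_sum (fun q _ => hc i ⟨0, hn⟩ q (by simp [Fin.le_def]))
    have : ∑ _q : Fin n, v i (σ i ⟨0, hn⟩) = (n : ℝ) * v i (σ i ⟨0, hn⟩) := by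
      simp [Finset.sum_const, Finset.card_univ, mul_comm]
    rw [this] at h2
    have hs : (∑ q, v i (σ i q)) = 1 := by rw [← h1]; exact hsum i
    linarith
  -- SW μ ≥ v i (μ i)
  have hSWμ : v i (σ i ⟨0, hn⟩) ≤ SWm v μ := by
    rw [← hi]
    exact Finset.single_le_sum (fun j _ => hpos j (μ j)) (Finset.mem_univ i)
  -- SW μ' ≤ n
  have hSW' : SWm v μ' ≤ (n : ℝ) := by
    have : ∀ j : Fin n, v j (μ' j) ≤ 1 := by
      intro j
      have := Finset.single_le_sum (fun x _ => hpos j x) (Finset.mem_univ (μ' j))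
      rw [hsum j] at this
      exact this
    calc SWm v μ' ≤ ∑ _j : Fin n, (1:ℝ) := Finset.sum_le_sum (fun j _ => this j)
      _ = (n : ℝ) := by simp
  have hμnn : 0 ≤ v i (σ i ⟨0, hn⟩) := hpos i _
  nlinarith [hSW', htop, hSWμ, hn']
end

section
/- Let k ∈ {1,…,n} and let v be a unit-sum valuation profile in the one-sided matching setting, consistent with an ordinal profile σ. Let v_k be the k-truncated profile: v_k agrees with v on each agent's k most-preferred items under σ and is 0 on all other items. Let μ be a matching maximizing SW(·|v_k) over all matchings. Then for every matching μ′: SW(μ′|v) ≤ (n/k + 2) · SW(μ|v). (Consistency bound of n/k + 2 for the mechanism that maximizes welfare under the zero-completed predicted k-truncated profile, when the prediction is accurate.) -/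
open Finset

/-- The `k`-truncated profile: agrees with `v` on each agent's `k` most-preferred items
(the items at positions `0, …, k-1` of `σ i`) and is `0` on all other items. -/
noncomputable def trunc {n : ℕ} (k : ℕ) (σ : Fin n → (Fin n ≃ Fin n))
    (v : Fin n → Fin n → ℝ) : Fin n → Fin n → ℝ :=
  fun i x => if ((σ i).symm x : ℕ) < k then v i x else 0

/-- Consistency bound of `n/k + 2` for the mechanism maximizing welfare under the
(zero-completed) `k`-truncated profile, when the prediction is accurate. -/
theorem stmt13 {n : ℕ} (k : ℕ) (hk1 : 1 ≤ k) (hkn : k ≤ n)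
    (σ : Fin n → (Fin n ≃ Fin n))
    (v : Fin n → Fin n → ℝ) (hv : UnitSum v) (hc : Consistent σ v)
    (μ : Equiv.Perm (Fin n)) (hμ : ∀ μ'', SWm (trunc k σ v) μ'' ≤ SWm (trunc k σ v) μ) :
    ∀ μ' : Equiv.Perm (Fin n), SWm v μ' ≤ ((n : ℝ) / k + 2) * SWm v μ := by
  intro μ'
  obtain ⟨hv0, hv1⟩ := hv
  set w : Fin n → Fin n → ℝ := trunc k σ v with hw
  have hn1 : 1 ≤ n := le_trans hk1 hkn
  haveI : NeZero n := ⟨by omega⟩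
  have hw0 : ∀ i x, 0 ≤ w i x := by
    intro i x; simp only [hw, trunc]; split <;> [exact hv0 i x; exact le_rfl]
  have hwv : ∀ i x, w i x ≤ v i x := by
    intro i x; simp only [hw, trunc]; split <;> [exact le_rfl; exact hv0 i x]
  -- T i = truncated total of agent i
  set T : Fin n → ℝ := fun i => ∑ x, w i x with hT
  have hTalt : ∀ i, T i = ∑ p : Fin n, (if (p:ℕ) < k then v i (σ i p) else 0) := by
    intro i
    show (∑ x : Fin n, w i x) = _
    rw [← Equiv.sum_comp (σ i) (w i)]
    simp [hw, trunc]
  -- key: outside top k, k * v i x ≤ T i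
  have hkey : ∀ i x, ¬ (((σ i).symm x : ℕ) < k) → (k:ℝ) * v i x ≤ T i := by
    intro i x hx
    rw [hTalt]
    have hcard : ∑ p : Fin n, (if (p:ℕ) < k then v i x else 0) = (k:ℝ) * v i x := by
      rw [Fin.sum_univ_eq_sum_range (fun j => if j < k then v i x else 0)]
      rw [← Finset.sum_subset (Finset.range_subset_range.2 hkn)
        (by intro y hy hy'; simp at hy' ⊢; omega)]
      rw [Finset.sum_ite_of_true (by intro y hy; simpa using hy)]
      simp [mul_comm]
    rw [← hcard]
    apply Finset.sum_le_sum
    intro p _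
    split
    · next hp =>
      have : v i (σ i ((σ i).symm x)) ≤ v i (σ i p) := by
        apply hc i p ((σ i).symm x)
        exact Fin.le_def.2 (by omega)
      simpa using this
    · exact le_rfl
  have hTnn : ∀ i, 0 ≤ T i := fun i => Finset.sum_nonneg fun x _ => hw0 i x
  -- cyclic shift bound: ∑ i, T i ≤ n * SWm w μ
  have hcyc : ∑ i, T i ≤ (n:ℝ) * SWm w μ := by
    have : ∑ c : Fin n, SWm w (Equiv.addRight c) = ∑ i, T i := by
      simp only [SWm, Equiv.coe_addRight]
      rw [Finset.sum_comm]
      refine Finset.sum_congr rfl fun i _ => ?_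
      show _ = (∑ x : Fin n, w i x)
      simpa using Equiv.sum_comp (Equiv.addLeft i) (w i)
    calc ∑ i, T i = ∑ c : Fin n, SWm w (Equiv.addRight c) := this.symm
      _ ≤ ∑ _c : Fin n, SWm w μ := Finset.sum_le_sum fun c _ => hμ _
      _ = (n:ℝ) * SWm w μ := by simp [mul_comm]
  have hSk_le : SWm w μ ≤ SWm v μ := Finset.sum_le_sum fun i _ => hwv i (μ i)
  have hS_nn : 0 ≤ SWm v μ :=
    Finset.sum_nonneg fun i _ => hv0 i (μ i)
  have hk0 : (0:ℝ) < k := by exact_mod_cast hk1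
  -- pointwise: v i (μ' i) ≤ w i (μ' i) + T i / k
  have hpt : ∀ i, v i (μ' i) ≤ w i (μ' i) + T i / k := by
    intro i
    by_cases h : ((σ i).symm (μ' i) : ℕ) < k
    · have : w i (μ' i) = v i (μ' i) := by simp [hw, trunc, h]
      rw [this]
      have := hTnn i
      have : 0 ≤ T i / k := div_nonneg this hk0.le
      linarith
    · have hwz : w i (μ' i) = 0 := by simp [hw, trunc, h]
      rw [hwz, zero_add, le_div_iff₀ hk0, mul_comm]
      exact hkey i (μ' i) h
  have hμ'w : SWm w μ' ≤ SWm w μ := hμ μ'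
  have step1 : SWm v μ' ≤ SWm w μ' + (∑ i, T i) / k := by
    rw [Finset.sum_div]
    rw [SWm, SWm, ← Finset.sum_add_distrib]
    exact Finset.sum_le_sum fun i _ => hpt i
  have h1 : ∑ i, T i ≤ (n:ℝ) * SWm v μ :=
    le_trans hcyc (mul_le_mul_of_nonneg_left hSk_le (by positivity))
  have step2 : (∑ i, T i) / k ≤ (n:ℝ) / k * SWm v μ := by
    rw [div_mul_eq_mul_div]
    gcongr
  calc SWm v μ' ≤ SWm w μ' + (∑ i, T i) / k := step1
    _ ≤ SWm v μ + (n:ℝ)/k * SWm v μ := by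
        have := le_trans hμ'w hSk_le
        linarith
    _ ≤ ((n:ℝ)/k + 2) * SWm v μ := by nlinarith
end

section
/- Let k ∈ {1,…,n} and let v be a unit-sum valuation profile in the one-sided matching setting, consistent with an ordinal profile σ. Let v_k be the k-truncated profile: v_k agrees with v on each agent's k most-preferred items under σ and is 0 on all other items. Let μ*_k be a matching maximizing SW(·|v_k) over all matchings. Then for every matching μ′: SW(μ′|v) ≤ (n/k + 1) · SW(μ*_k|v_k). -/
open Finset

lemma card_filter_val_lt (n k : ℕ) (hkn : k ≤ n) :
    (Finset.univ.filter (fun p : Fin n => (p : ℕ) < k)).card = k := by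
  classical
  have he : (Finset.univ.filter (fun p : Fin n => (p : ℕ) < k))
      = (Finset.range k).attachFin (fun m hm => lt_of_lt_of_le (Finset.mem_range.mp hm) hkn) := by
    ext p
    simp [Finset.mem_attachFin, Finset.mem_range]
  rw [he, Finset.card_attachFin, Finset.card_range]

/-- The optimal `k`-truncated welfare is an `(n/k + 1)`-approximation of the optimal
welfare. -/
theorem stmt14 {n : ℕ} (k : ℕ) (hk1 : 1 ≤ k) (hkn : k ≤ n)
    (σ : Fin n → (Fin n ≃ Fin n))
    (v : Fin n → Fin n → ℝ) (hv : UnitSum v) (hc : Consistent σ v)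
    (μstark : Equiv.Perm (Fin n))
    (hμ : ∀ μ'', SWm (trunc k σ v) μ'' ≤ SWm (trunc k σ v) μstark) :
    ∀ μ' : Equiv.Perm (Fin n), SWm v μ' ≤ ((n : ℝ) / k + 1) * SWm (trunc k σ v) μstark := by
  classical
  intro μ'
  obtain ⟨hnn, hsum⟩ := hv
  set vk := trunc k σ v with hvkdef
  set OPT := SWm vk μstark with hOPT
  have hkpos : (0 : ℝ) < (k : ℝ) := by exact_mod_cast hk1
  have : NeZero n := ⟨by omega⟩
  have hvknn : ∀ i x, 0 ≤ vk i x := by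
    intro i x
    by_cases h : ((σ i).symm x : ℕ) < k <;> simp [hvkdef, trunc, h, hnn i x]
  -- (A) total truncated mass is at most n * OPT
  have hA : ∑ i, ∑ x, vk i x ≤ (n : ℝ) * OPT := by
    have h1 : ∑ c : Fin n, SWm vk (Equiv.addLeft c) = ∑ i, ∑ x, vk i x := by
      unfold SWm
      rw [Finset.sum_comm]
      refine Finset.sum_congr rfl fun i _ => ?_
      exact Equiv.sum_comp (Equiv.addRight i) (vk i)
    have h2 : ∑ c : Fin n, SWm vk (Equiv.addLeft c) ≤ ∑ _c : Fin n, OPT :=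
      Finset.sum_le_sum fun c _ => hμ _
    rw [h1] at h2
    simpa using h2
  -- (B) pointwise bound
  have hB : ∀ i, v i (μ' i) ≤ vk i (μ' i) + (∑ x, vk i x) / k := by
    intro i
    by_cases h : ((σ i).symm (μ' i) : ℕ) < k
    · have : vk i (μ' i) = v i (μ' i) := by simp [hvkdef, trunc, h]
      rw [this]
      have : 0 ≤ (∑ x, vk i x) / k :=
        div_nonneg (Finset.sum_nonneg fun x _ => hvknn i x) hkpos.le
      linarith
    · have hvk0 : vk i (μ' i) = 0 := by simp [hvkdef, trunc, h]
      rw [hvk0, zero_add, le_div_iff₀ hkpos]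
      -- ∑ x, vk i x = ∑ p, if p < k then v i (σ i p) else 0
      have hre : ∑ x, vk i x = ∑ p : Fin n, if (p : ℕ) < k then v i (σ i p) else 0 := by
        rw [← Equiv.sum_comp (σ i) (vk i)]
        refine Finset.sum_congr rfl fun p _ => ?_
        simp [hvkdef, trunc]
      rw [hre]
      have key : ∀ p : Fin n, (p : ℕ) < k → v i (μ' i) ≤ v i (σ i p) := by
        intro p hp
        have hq : μ' i = σ i ((σ i).symm (μ' i)) := ((σ i).apply_symm_apply _).symm
        rw [hq]
        apply hc i p ((σ i).symm (μ' i))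
        have : (p : ℕ) ≤ ((σ i).symm (μ' i) : ℕ) := le_of_lt (lt_of_lt_of_le hp (not_lt.mp h))
        exact this
      calc v i (μ' i) * k = ∑ p ∈ Finset.univ.filter (fun p : Fin n => (p : ℕ) < k),
              v i (μ' i) := by
            rw [Finset.sum_const, card_filter_val_lt n k hkn, nsmul_eq_mul, mul_comm]
        _ ≤ ∑ p ∈ Finset.univ.filter (fun p : Fin n => (p : ℕ) < k), v i (σ i p) := by
            refine Finset.sum_le_sum fun p hp => ?_
            exact key p (Finset.mem_filter.mp hp).2
        _ = ∑ p : Fin n, if (p : ℕ) < k then v i (σ i p) else 0 := by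
            rw [Finset.sum_filter]
  -- assemble
  have hmain : SWm v μ' ≤ SWm vk μ' + (∑ i, ∑ x, vk i x) / k := by
    unfold SWm
    rw [Finset.sum_div, ← Finset.sum_add_distrib]
    exact Finset.sum_le_sum fun i _ => hB i
  have h3 : SWm vk μ' ≤ OPT := hμ μ'
  have h4 : (∑ i, ∑ x, vk i x) / k ≤ ((n : ℝ) * OPT) / k :=
    (div_le_div_iff_of_pos_right hkpos).mpr hA
  have h5 : (n : ℝ) * OPT / k + OPT = ((n : ℝ) / k + 1) * OPT := by ring
  linarith
end

section
/- Let k ∈ {1,…,n} and let v be a unit-sum valuation profile in the one-sided matching setting, consistent with an ordinal profile σ. Let v_k be the k-truncated profile (agreeing with v on each agent's k most-preferred items and 0 elsewhere), and let μ*_k be a matching maximizing SW(·|v_k). Let μ be any matching with SW(μ|v) > 0 (e.g., the welfare-maximizer under a possibly inaccurate predicted k-truncated profile), and define the prediction error η = SW(μ*_k|v) / SW(μ|v). Then for every matching μ′: SW(μ′|v) ≤ (n/k + 1) · η · SW(μ|v). -/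
open Finset

/-- Error-dependent distortion bound `(n/k + 1)·η` where
`η = SW(μ*_k|v) / SW(μ|v)` is the prediction error. -/
theorem stmt15 {n : ℕ} (k : ℕ) (hk1 : 1 ≤ k) (hkn : k ≤ n)
    (σ : Fin n → (Fin n ≃ Fin n))
    (v : Fin n → Fin n → ℝ) (hv : UnitSum v) (hc : Consistent σ v)
    (μstark : Equiv.Perm (Fin n))
    (hμstark : ∀ μ'', SWm (trunc k σ v) μ'' ≤ SWm (trunc k σ v) μstark)
    (μ : Equiv.Perm (Fin n)) (hμpos : 0 < SWm v μ) :
    ∀ μ' : Equiv.Perm (Fin n),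
      SWm v μ' ≤ ((n : ℝ) / k + 1) * (SWm v μstark / SWm v μ) * SWm v μ := by
  intro μ'
  haveI : NeZero n := ⟨by omega⟩
  obtain ⟨hv0, hv1⟩ := hv
  set t := trunc k σ v with ht
  have hkpos : (0:ℝ) < k := by exact_mod_cast hk1
  have htle : ∀ i x, t i x ≤ v i x := by
    intro i x; simp only [ht, trunc]; split
    · exact le_refl _
    · exact hv0 i x
  have htnn : ∀ i x, 0 ≤ t i x := by
    intro i x; simp only [ht, trunc]; split
    · exact hv0 i x
    · exact le_refl _
  have hSWle : ∀ π, SWm t π ≤ SWm v π :=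
    fun π => Finset.sum_le_sum (fun i _ => htle i (π i))
  have hSWnn : ∀ π, 0 ≤ SWm t π :=
    fun π => Finset.sum_nonneg (fun i _ => htnn i (π i))
  set T : Fin n → ℝ := fun i => ∑ x, t i x with hT
  have hTform : ∀ i, T i = ∑ p : Fin n, if (p:ℕ) < k then v i (σ i p) else 0 := by
    intro i
    show (∑ x, t i x) = _
    rw [← Equiv.sum_comp (σ i) (fun x => t i x)]
    refine Finset.sum_congr rfl (fun p _ => ?_)
    simp [ht, trunc]
  have hTnn : ∀ i, 0 ≤ T i := fun i => Finset.sum_nonneg fun x _ => htnn i x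
  -- averaging over cyclic shifts
  have havg : ∑ i, T i ≤ n * SWm t μstark := by
    have h1 : ∑ j : Fin n, SWm t (Equiv.addRight j) = ∑ i, T i := by
      unfold SWm
      rw [Finset.sum_comm]
      refine Finset.sum_congr rfl (fun i _ => ?_)
      rw [hT]
      exact Equiv.sum_comp (Equiv.addLeft i) (fun x => t i x)
    calc ∑ i, T i = ∑ _j : Fin n, SWm t (Equiv.addRight _j) := h1.symm
      _ ≤ ∑ _j : Fin n, SWm t μstark :=
          Finset.sum_le_sum (fun j _ => hμstark _)
      _ = n * SWm t μstark := by
          rw [Finset.sum_const, Finset.card_univ, Fintype.card_fin, nsmul_eq_mul]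
  -- per-agent bound
  have hper : ∀ i, v i (μ' i) ≤ t i (μ' i) + (1/k) * T i := by
    intro i
    by_cases h : (((σ i).symm (μ' i) : Fin n) : ℕ) < k
    · have hte : t i (μ' i) = v i (μ' i) := by simp [ht, trunc, h]
      rw [hte]
      have h9 := hTnn i
      have : 0 ≤ (1/(k:ℝ)) * T i := by positivity
      linarith
    · have ht0 : t i (μ' i) = 0 := by simp [ht, trunc, h]
      rw [ht0, zero_add]
      have key : (k:ℝ) * v i (μ' i) ≤ T i := by
        rw [hTform i]
        have step : ∀ p : Fin n, (if (p:ℕ) < k then v i (μ' i) else 0) ≤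
            (if (p:ℕ) < k then v i (σ i p) else 0) := by
          intro p
          split
          · rename_i hp
            have hq : μ' i = σ i ((σ i).symm (μ' i)) := by simp
            rw [hq]
            exact hc i p _ (by push_neg at h; exact Fin.le_def.2 (by omega))
          · exact le_refl _
        calc (k:ℝ) * v i (μ' i)
            = ∑ p : Fin n, (if (p:ℕ) < k then v i (μ' i) else 0) := by
              rw [Fin.sum_univ_eq_sum_range (fun j => if j < k then v i (μ' i) else 0) n]
              rw [← Finset.sum_subset (Finset.range_subset_range.2 hkn)
                (fun j _ hj => if_neg (by simpa using hj))]
              rw [Finset.sum_congr rfl (fun j hj => if_pos (Finset.mem_range.1 hj))]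
              rw [Finset.sum_const, Finset.card_range, nsmul_eq_mul]
          _ ≤ ∑ p : Fin n, (if (p:ℕ) < k then v i (σ i p) else 0) :=
              Finset.sum_le_sum (fun p _ => step p)
      calc v i (μ' i) = (1/(k:ℝ)) * ((k:ℝ) * v i (μ' i)) := by field_simp
        _ ≤ (1/(k:ℝ)) * T i := by
            apply mul_le_mul_of_nonneg_left key (by positivity)
  -- assemble
  have hmain : SWm v μ' ≤ ((n:ℝ)/k + 1) * SWm v μstark := by
    have h2 : SWm v μ' ≤ SWm t μ' + (1/k) * ∑ i, T i := by
      unfold SWm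
      rw [Finset.mul_sum, ← Finset.sum_add_distrib]
      exact Finset.sum_le_sum (fun i _ => hper i)
    have h3 : SWm t μ' + (1/k) * ∑ i, T i ≤ SWm t μstark + (1/k) * (n * SWm t μstark) := by
      have := hμstark μ'
      have h4 : (1/(k:ℝ)) * ∑ i, T i ≤ (1/k) * (n * SWm t μstark) :=
        mul_le_mul_of_nonneg_left havg (by positivity)
      linarith
    have h5 : SWm t μstark + (1/(k:ℝ)) * (n * SWm t μstark)
        = ((n:ℝ)/k + 1) * SWm t μstark := by ring
    have h6 : ((n:ℝ)/k + 1) * SWm t μstark ≤ ((n:ℝ)/k + 1) * SWm v μstark := by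
      apply mul_le_mul_of_nonneg_left (hSWle μstark) (by positivity)
    linarith
  have hne : SWm v μ ≠ 0 := ne_of_gt hμpos
  rw [mul_assoc, div_mul_cancel₀ _ hne]
  exact hmain
end

section
/- Let k ≥ 1 and let n be an even integer with n ≥ 2k + 2. Label the n items a_1, …, a_k, b_1, …, b_{n/2}, c_1, …, c_{n/2−k}, and let σ be the ordinal profile in which, for every odd i ∈ {1,…,n−1}, agents i and i+1 both rank a_1, …, a_k in positions 1 through k, rank b_{⌈i/2⌉} in position k+1, and rank the remaining items arbitrarily afterwards. Then for every matching μ there exists a unit-sum valuation profile v consistent with σ such that every agent has value 1/(k+1) for each of her k most-preferred items (so v agrees with the predicted k-truncated profile assigning value 1/(k+1) to each top-k item), SW(μ|v) ≤ 1, and there exists a matching μ* with SW(μ*|v) ≥ (n+1)/(2(k+1)). (This shows that any matching mechanism given a k-truncated valuation profile as prediction has consistency Ω(n/k).) -/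
open Finset

set_option maxHeartbeats 1000000 in
/-- The lower-bound instance showing that any matching mechanism given a `k`-truncated
valuation profile as prediction has consistency `Ω(n/k)`. Items are labeled by the pairwise
disjoint injections `a : Fin k → Fin n`, `b : Fin (n/2) → Fin n`,
`c : Fin (n/2 - k) → Fin n`; for every agent `i`, positions `0, …, k-1` hold
`a_1, …, a_k` in order and position `k` holds `b_{⌈(i+1)/2⌉}` (agents `2t` and `2t+1`,
zero-indexed, share `b_t`). -/
theorem stmt16 (k n : ℕ) (hk : 1 ≤ k) (hn2 : 2 ∣ n) (hnk : 2 * k + 2 ≤ n)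
    (a : Fin k → Fin n) (b : Fin (n / 2) → Fin n) (c : Fin (n / 2 - k) → Fin n)
    (hainj : Function.Injective a) (hbinj : Function.Injective b)
    (hcinj : Function.Injective c)
    (hab : ∀ i j, a i ≠ b j) (hac : ∀ i j, a i ≠ c j) (hbc : ∀ i j, b i ≠ c j)
    (σ : Fin n → (Fin n ≃ Fin n))
    (hσa : ∀ (i : Fin n) (p : ℕ) (hp : p < k), σ i ⟨p, by omega⟩ = a ⟨p, hp⟩)
    (hσb : ∀ i : Fin n, σ i ⟨k, by omega⟩ = b ⟨(i : ℕ) / 2, by have := i.isLt; omega⟩) :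
    ∀ μ : Equiv.Perm (Fin n),
      ∃ v : Fin n → Fin n → ℝ, UnitSum v ∧ Consistent σ v ∧
        (∀ (i : Fin n) (p : Fin n), (p : ℕ) < k → v i (σ i p) = 1 / ((k : ℝ) + 1)) ∧
        SWm v μ ≤ 1 ∧
        ∃ μstar : Equiv.Perm (Fin n),
          ((n : ℝ) + 1) / (2 * ((k : ℝ) + 1)) ≤ SWm v μstar := by
  intro μ
  have hkn : k < n := by omega
  set K : ℝ := 1 / ((k : ℝ) + 1) with hKdef
  have hKpos : 0 < K := by positivity
  have hnkR : (0:ℝ) < (n : ℝ) - (k : ℝ) := by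
    have : (k : ℝ) < (n : ℝ) := by exact_mod_cast hkn
    linarith
  set δ : ℝ := K / ((n : ℝ) - (k : ℝ)) with hδdef
  have hδpos : 0 < δ := by positivity
  have hδK : δ ≤ K := by
    rw [hδdef, div_le_iff₀ hnkR]
    have h1 : (1:ℝ) ≤ (n : ℝ) - (k : ℝ) := by
      have : (k : ℕ) + 1 ≤ n := by omega
      have := (Nat.cast_le (α := ℝ)).2 this
      push_cast at this; linarith
    nlinarith
  have ht' : ∀ i : Fin n, (i : ℕ) / 2 < n / 2 := fun i => by have := i.isLt; omega
  set t : Fin n → Fin (n / 2) := fun i => ⟨(i : ℕ) / 2, ht' i⟩ with htdef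
  set w : Fin n → ℕ → ℝ := fun i p =>
    if p < k then K else if μ i = b (t i) then δ else if p = k then K else 0 with hwdef
  set v : Fin n → Fin n → ℝ := fun i x => w i ((σ i).symm x) with hvdef
  have hvσ : ∀ (i : Fin n) (p : Fin n), v i (σ i p) = w i p := by
    intro i p
    simp [hvdef]
  have hw_nonneg : ∀ (i : Fin n) (p : ℕ), 0 ≤ w i p := by
    intro i p
    simp only [hwdef]
    split_ifs <;> linarith
  have hw_le : ∀ (i : Fin n) (p : ℕ), w i p ≤ K := by
    intro i p
    simp only [hwdef]
    split_ifs <;> linarith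
  have hv_nonneg : ∀ (i : Fin n) (x : Fin n), 0 ≤ v i x := fun i x => hw_nonneg i _
  -- position lemmas
  have hposa : ∀ (i : Fin n) (j : ℕ) (hj : j < k),
      (σ i).symm (a ⟨j, hj⟩) = ⟨j, by omega⟩ := by
    intro i j hj
    rw [Equiv.symm_apply_eq]
    exact (hσa i j hj).symm
  have hposb : ∀ i : Fin n, (σ i).symm (b (t i)) = ⟨k, by omega⟩ := by
    intro i
    rw [Equiv.symm_apply_eq]
    exact (hσb i).symm
  -- unit sum
  have hsum : ∀ i : Fin n, ∑ x, v i x = 1 := by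
    intro i
    have h1 : ∑ x, v i x = ∑ p : Fin n, w i p := by
      rw [hvdef]
      exact Equiv.sum_comp (σ i).symm (fun p => w i (p : ℕ))
    rw [h1, Fin.sum_univ_eq_sum_range (fun p => w i p) n]
    rw [Finset.range_eq_Ico, ← Finset.sum_Ico_consecutive _ (Nat.zero_le k) (le_of_lt hkn)]
    have hhead : ∑ p ∈ Finset.Ico 0 k, w i p = (k : ℝ) * K := by
      have heq : ∀ p ∈ Finset.Ico 0 k, w i p = K := by
        intro p hp
        simp only [Finset.mem_Ico] at hp
        simp only [hwdef]
        rw [if_pos hp.2]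
      rw [Finset.sum_congr rfl heq, Finset.sum_const, Nat.card_Ico, Nat.sub_zero, nsmul_eq_mul]
    have hKk : (k : ℝ) * K + K = 1 := by
      rw [hKdef]; field_simp
    by_cases hb1 : μ i = b (t i)
    · have htail : ∑ p ∈ Finset.Ico k n, w i p = ((n : ℝ) - (k : ℝ)) * δ := by
        have heq : ∀ p ∈ Finset.Ico k n, w i p = δ := by
          intro p hp
          simp only [Finset.mem_Ico] at hp
          simp only [hwdef]
          rw [if_neg (by omega), if_pos hb1]
        have hcast : ((n - k : ℕ) : ℝ) = (n : ℝ) - (k : ℝ) := by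
          push_cast [Nat.cast_sub (le_of_lt hkn)]; ring
        rw [Finset.sum_congr rfl heq, Finset.sum_const, Nat.card_Ico, nsmul_eq_mul, hcast]
      rw [hhead, htail, hδdef]
      field_simp
      linarith [hKk]
    · have htail : ∑ p ∈ Finset.Ico k n, w i p = K := by
        rw [← Finset.sum_Ico_consecutive _ (le_of_lt (Nat.lt_succ_self k)) (by omega : k + 1 ≤ n)]
        have h2 : ∑ p ∈ Finset.Ico k (k+1), w i p = K := by
          rw [Finset.sum_Ico_eq_sum_range]
          simp only [Nat.add_sub_cancel_left, Finset.sum_range_one]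
          simp only [hwdef]
          rw [if_neg (by omega), if_neg hb1, if_pos (Nat.add_zero k)]
        have h3 : ∑ p ∈ Finset.Ico (k+1) n, w i p = 0 := by
          apply Finset.sum_eq_zero
          intro p hp
          simp only [Finset.mem_Ico] at hp
          simp only [hwdef]
          rw [if_neg (by omega), if_neg hb1, if_neg (by omega)]
        rw [h2, h3, add_zero]
      rw [hhead, htail, hKk]
  -- consistency
  have hcons : Consistent σ v := by
    intro i p q hpq
    rw [hvσ, hvσ]
    have hpq' : (p : ℕ) ≤ (q : ℕ) := hpq
    simp only [hwdef]
    split_ifs <;> first | rfl | linarith | omega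
  -- top-k values
  have htop : ∀ (i : Fin n) (p : Fin n), (p : ℕ) < k → v i (σ i p) = K := by
    intro i p hp
    rw [hvσ]
    simp only [hwdef]
    rw [if_pos hp]
  -- SW(μ) ≤ 1
  have hA : ∀ i : Fin n, v i (μ i) ≤
      (if (∃ j, μ i = a j) then K else 0) + (if μ i = b (t i) then δ else 0) := by
    intro i
    by_cases hiA : ∃ j, μ i = a j
    · obtain ⟨j, hj⟩ := hiA
      have : v i (μ i) = K := by
        rw [hvdef]
        simp only
        have hja : a j = a ⟨(j : ℕ), j.isLt⟩ := by congr
        rw [hj, hja, hposa i j j.isLt]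
        simp only [hwdef]
        rw [if_pos j.isLt]
      rw [this, if_pos ⟨j, hj⟩]
      split_ifs <;> linarith
    · rw [if_neg hiA, zero_add]
      by_cases hiB : μ i = b (t i)
      · have : v i (μ i) = δ := by
          rw [hvdef]
          simp only
          rw [hiB, hposb i]
          simp only [hwdef]
          rw [if_neg (by omega), if_pos hiB]
        rw [this, if_pos hiB]
      · have : v i (μ i) = 0 := by
          set p := (σ i).symm (μ i) with hp
          have hμip : μ i = σ i p := (Equiv.apply_symm_apply (σ i) (μ i)).symm
          have hpk : ¬ ((p : ℕ) < k) := by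
            intro hlt
            apply hiA
            refine ⟨⟨(p : ℕ), hlt⟩, ?_⟩
            rw [hμip, ← hσa i (p : ℕ) hlt]
          have hpk2 : (p : ℕ) ≠ k := by
            intro heq
            apply hiB
            have hpfin : p = ⟨k, by omega⟩ := Fin.ext heq
            rw [hμip, hpfin, hσb i]
          show w i ((σ i).symm (μ i)) = 0
          rw [← hp]
          simp only [hwdef]
          rw [if_neg hpk, if_neg hiB, if_neg hpk2]
        rw [this, if_neg hiB]
  -- counting for SW(μ) ≤ 1
  set A : Finset (Fin n) := Finset.image (fun j : Fin k => μ.symm (a j)) Finset.univ with hAdef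
  have hAmem : ∀ i : Fin n, i ∈ A ↔ ∃ j, μ i = a j := by
    intro i
    simp only [hAdef, Finset.mem_image, Finset.mem_univ, true_and]
    constructor
    · rintro ⟨j, rfl⟩
      exact ⟨j, (Equiv.apply_symm_apply μ (a j))⟩
    · rintro ⟨j, hj⟩
      exact ⟨j, by rw [← hj, Equiv.symm_apply_apply]⟩
  have hAcard : A.card = k := by
    have hinj : Function.Injective (fun j : Fin k => μ.symm (a j)) :=
      fun x y h => hainj (μ.symm.injective h)
    rw [hAdef, Finset.card_image_of_injective _ hinj, Finset.card_univ, Fintype.card_fin]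
  set B : Finset (Fin n) := Finset.univ.filter (fun i => μ i = b (t i)) with hBdef
  have hBcard : B.card ≤ n / 2 := by
    have : Set.InjOn t B := by
      intro i hi j hj hij
      simp only [hBdef, Finset.coe_filter, Set.mem_setOf_eq] at hi hj
      apply μ.injective
      rw [hi.2, hj.2, hij]
    calc B.card ≤ (Finset.univ : Finset (Fin (n/2))).card :=
          Finset.card_le_card_of_injOn t (fun _ _ => Finset.mem_univ _) this
      _ = n / 2 := by rw [Finset.card_univ, Fintype.card_fin]
  have hSW1 : SWm v μ ≤ 1 := by
    have step1 : SWm v μ ≤ ∑ i : Fin n,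
        ((if i ∈ A then K else 0) + (if i ∈ B then δ else 0)) := by
      apply Finset.sum_le_sum
      intro i _
      have := hA i
      simp only [hAmem i, hBdef, Finset.mem_filter, Finset.mem_univ, true_and]
      exact this
    have step2 : ∑ i : Fin n, ((if i ∈ A then K else 0) + (if i ∈ B then δ else 0))
        = (A.card : ℝ) * K + (B.card : ℝ) * δ := by
      rw [Finset.sum_add_distrib, Finset.sum_ite_mem, Finset.sum_ite_mem,
        Finset.univ_inter, Finset.univ_inter, Finset.sum_const, Finset.sum_const,
        nsmul_eq_mul, nsmul_eq_mul]
    have hhalf : ((n / 2 : ℕ) : ℝ) * δ ≤ K := by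
      have h1 : ((n / 2 : ℕ) : ℝ) ≤ (n : ℝ) - (k : ℝ) := by
        have : (n / 2 : ℕ) + k ≤ n := by omega
        have := (Nat.cast_le (α := ℝ)).2 this
        push_cast at this
        linarith
      have h2 : ((n / 2 : ℕ) : ℝ) * δ ≤ ((n : ℝ) - (k : ℝ)) * δ :=
        mul_le_mul_of_nonneg_right h1 (le_of_lt hδpos)
      have h3 : ((n : ℝ) - (k : ℝ)) * δ = K := by
        rw [hδdef]; field_simp
      linarith
    have hKk : (k : ℝ) * K + K = 1 := by
      rw [hKdef]; field_simp
    have hB2 : (B.card : ℝ) * δ ≤ ((n / 2 : ℕ) : ℝ) * δ :=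
      mul_le_mul_of_nonneg_right (by exact_mod_cast hBcard) (le_of_lt hδpos)
    calc SWm v μ ≤ (A.card : ℝ) * K + (B.card : ℝ) * δ := by rw [← step2]; exact step1
      _ ≤ (k : ℝ) * K + K := by rw [hAcard]; linarith
      _ = 1 := hKk
  -- construction of μstar
  have h2s : ∀ s : Fin (n / 2), 2 * (s : ℕ) < n := fun s => by have := s.isLt; omega
  have h2s1 : ∀ s : Fin (n / 2), 2 * (s : ℕ) + 1 < n := fun s => by have := s.isLt; omega
  set e0 : Fin (n / 2) → Fin n := fun s => ⟨2 * s, h2s s⟩ with he0def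
  set e1 : Fin (n / 2) → Fin n := fun s => ⟨2 * s + 1, h2s1 s⟩ with he1def
  set chosen : Fin (n / 2) → Fin n := fun s => if μ (e0 s) = b s then e1 s else e0 s with hchdef
  set other : Fin (n / 2) → Fin n := fun s => if μ (e0 s) = b s then e0 s else e1 s with hotdef
  have ht0 : ∀ s, t (e0 s) = s := by
    intro s
    apply Fin.ext
    show (2 * (s : ℕ)) / 2 = (s : ℕ)
    omega
  have ht1 : ∀ s, t (e1 s) = s := by
    intro s
    apply Fin.ext
    show (2 * (s : ℕ) + 1) / 2 = (s : ℕ)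
    omega
  have hne01 : ∀ s, e0 s ≠ e1 s := by
    intro s h
    have h2 : 2 * (s : ℕ) = 2 * (s : ℕ) + 1 := congrArg Fin.val h
    omega
  have htchosen : ∀ s, t (chosen s) = s := by
    intro s
    simp only [hchdef]
    split_ifs
    · exact ht1 s
    · exact ht0 s
  have htother : ∀ s, t (other s) = s := by
    intro s
    simp only [hotdef]
    split_ifs
    · exact ht0 s
    · exact ht1 s
  have hco : ∀ s, chosen s ≠ other s := by
    intro s
    simp only [hchdef, hotdef]
    split_ifs
    · exact fun h => hne01 s h.symm
    · exact hne01 s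
  have hμchosen : ∀ s, μ (chosen s) ≠ b s := by
    intro s
    simp only [hchdef]
    split_ifs with h
    · intro h2
      exact hne01 s (μ.injective (by rw [h, h2]))
    · exact h
  have hpair : ∀ i : Fin n, i = chosen (t i) ∨ i = other (t i) := by
    intro i
    have hv2 : (i : ℕ) = 2 * ((t i) : ℕ) ∨ (i : ℕ) = 2 * ((t i) : ℕ) + 1 := by
      simp only [htdef]; omega
    have he : i = e0 (t i) ∨ i = e1 (t i) := by
      rcases hv2 with h | h
      · left; apply Fin.ext; show (i : ℕ) = 2 * ((t i) : ℕ); omega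
      · right; apply Fin.ext; show (i : ℕ) = 2 * ((t i) : ℕ) + 1; omega
    simp only [hchdef, hotdef]
    split_ifs <;> tauto
  have hksmall : k ≤ n / 2 := by omega
  have hgc : ∀ s : Fin (n / 2), ¬ (s : ℕ) < k → (s : ℕ) - k < n / 2 - k := by
    intro s h; have := s.isLt; omega
  set g : Fin (n / 2) → Fin n :=
    fun s => if h : (s : ℕ) < k then a ⟨s, h⟩ else c ⟨(s : ℕ) - k, hgc s h⟩ with hgdef
  have hgb : ∀ s s' : Fin (n / 2), g s ≠ b s' := by
    intro s s'
    simp only [hgdef]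
    split_ifs
    · exact hab _ _
    · intro h; exact hbc _ _ h.symm
  have hginj : Function.Injective g := by
    intro s s' h
    simp only [hgdef] at h
    split_ifs at h with h1 h2 h2
    · have := hainj h
      have := congrArg Fin.val this
      simp at this
      exact Fin.ext this
    · exact absurd h (hac _ _)
    · exact absurd h.symm (hac _ _)
    · have := hcinj h
      have := congrArg Fin.val this
      simp at this
      have hs := s.isLt
      exact Fin.ext (by omega)
  set f : Fin n → Fin n := fun i => if i = chosen (t i) then b (t i) else g (t i) with hfdef
  have hfinj : Function.Injective f := by
    intro i j h
    simp only [hfdef] at h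
    by_cases hi : i = chosen (t i) <;> by_cases hj : j = chosen (t j)
    · rw [if_pos hi, if_pos hj] at h
      have hts : t i = t j := hbinj h
      rw [hi, hj, hts]
    · rw [if_pos hi, if_neg hj] at h
      exact absurd h.symm (hgb _ _)
    · rw [if_neg hi, if_pos hj] at h
      exact absurd h (hgb _ _)
    · rw [if_neg hi, if_neg hj] at h
      have hts : t i = t j := hginj h
      rcases hpair i with h1 | h1
      · exact absurd h1 hi
      rcases hpair j with h2 | h2
      · exact absurd h2 hj
      rw [h1, h2, hts]
  set μstar : Equiv.Perm (Fin n) :=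
    Equiv.ofBijective f (Finite.injective_iff_bijective.mp hfinj) with hμstardef
  refine ⟨v, ⟨hv_nonneg, hsum⟩, hcons, htop, hSW1, μstar, ?_⟩
  -- lower bound for SW(μstar)
  set C : Finset (Fin n) := Finset.image chosen Finset.univ with hCdef
  have hchinj : Function.Injective chosen := by
    intro s s' h
    have := congrArg t h
    rwa [htchosen, htchosen] at this
  have hCcard : C.card = n / 2 := by
    rw [hCdef, Finset.card_image_of_injective _ hchinj, Finset.card_univ, Fintype.card_fin]
  set emb : Fin k → Fin (n / 2) := fun j => ⟨(j : ℕ), lt_of_lt_of_le j.isLt hksmall⟩ with hembdef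
  set D : Finset (Fin n) := Finset.image (fun j => other (emb j)) Finset.univ with hDdef
  have hotinj : Function.Injective other := by
    intro s s' h
    have := congrArg t h
    rwa [htother, htother] at this
  have hembinj : Function.Injective emb := by
    intro j j' h
    have h2 : ((emb j : Fin (n / 2)) : ℕ) = ((emb j' : Fin (n / 2)) : ℕ) := congrArg Fin.val h
    exact Fin.ext h2
  have hDcard : D.card = k := by
    have hinj : Function.Injective (fun j => other (emb j)) :=
      fun j j' h => hembinj (hotinj h)
    rw [hDdef, Finset.card_image_of_injective _ hinj, Finset.card_univ, Fintype.card_fin]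
  have hCD : Disjoint C D := by
    rw [Finset.disjoint_left]
    intro x hxC hxD
    simp only [hCdef, hDdef, Finset.mem_image, Finset.mem_univ, true_and] at hxC hxD
    obtain ⟨s, rfl⟩ := hxC
    obtain ⟨j, hj⟩ := hxD
    have hts : s = emb j := by
      have := congrArg t hj
      rw [htother, htchosen] at this
      exact this.symm
    rw [hts] at hj
    exact hco (emb j) hj.symm
  have hDk : ∀ i ∈ D, ((t i : ℕ) < k) ∧ i ≠ chosen (t i) := by
    intro i hi
    simp only [hDdef, Finset.mem_image, Finset.mem_univ, true_and] at hi
    obtain ⟨j, rfl⟩ := hi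
    constructor
    · rw [htother]
      simp only [hembdef]
      exact j.isLt
    · rw [htother]
      intro h
      exact hco (emb j) h.symm
  have hlow : ∀ i : Fin n, (if i ∈ C then K else 0) + (if i ∈ D then K else 0) ≤ v i (μstar i) := by
    intro i
    have hμf : μstar i = f i := rfl
    by_cases hiC : i ∈ C
    · have hiD : i ∉ D := Finset.disjoint_left.mp hCD hiC
      rw [if_pos hiC, if_neg hiD, add_zero]
      simp only [hCdef, Finset.mem_image, Finset.mem_univ, true_and] at hiC
      obtain ⟨s, rfl⟩ := hiC
      have hfi : f (chosen s) = b (t (chosen s)) := by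
        simp only [hfdef]
        rw [if_pos (by rw [htchosen])]
      have hval : v (chosen s) (μstar (chosen s)) = w (chosen s) k := by
        rw [hμf, hfi, hvdef]
        simp only
        rw [hposb (chosen s)]
      rw [hval]
      simp only [hwdef]
      rw [if_neg (by omega), if_neg (by rw [htchosen]; exact hμchosen s)]
      norm_num
    · rw [if_neg hiC, zero_add]
      by_cases hiD : i ∈ D
      · rw [if_pos hiD]
        obtain ⟨hDk1, hDk2⟩ := hDk i hiD
        have hfi : f i = a ⟨((t i) : ℕ), hDk1⟩ := by
          simp only [hfdef]
          rw [if_neg hDk2]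
          simp only [hgdef]
          rw [dif_pos hDk1]
        have hval : v i (μstar i) = w i ((t i) : ℕ) := by
          rw [hμf, hfi, hvdef]
          simp only
          rw [hposa i ((t i) : ℕ) hDk1]
        rw [hval]
        simp only [hwdef]
        rw [if_pos hDk1]
      · rw [if_neg hiD]
        exact hv_nonneg i (μstar i)
  have hsum2 : ∑ i : Fin n, ((if i ∈ C then K else 0) + (if i ∈ D then K else 0))
      = ((n / 2 : ℕ) : ℝ) * K + (k : ℝ) * K := by
    rw [Finset.sum_add_distrib, Finset.sum_ite_mem, Finset.sum_ite_mem,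
      Finset.univ_inter, Finset.univ_inter, Finset.sum_const, Finset.sum_const,
      nsmul_eq_mul, nsmul_eq_mul, hCcard, hDcard]
  have hstep : ((n / 2 : ℕ) : ℝ) * K + (k : ℝ) * K ≤ SWm v μstar := by
    rw [← hsum2]
    exact Finset.sum_le_sum (fun i _ => hlow i)
  have hhalf2 : ((n / 2 : ℕ) : ℝ) * 2 = (n : ℝ) := by
    exact_mod_cast Nat.div_mul_cancel hn2
  have hk1 : (1 : ℝ) ≤ (k : ℝ) := by exact_mod_cast hk
  have hkpos : (0 : ℝ) < (k : ℝ) + 1 := by linarith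
  have htarget : ((n : ℝ) + 1) / (2 * ((k : ℝ) + 1))
      ≤ ((n / 2 : ℕ) : ℝ) * K + (k : ℝ) * K := by
    rw [hKdef, div_le_iff₀ (by positivity : (0 : ℝ) < 2 * ((k : ℝ) + 1))]
    have hexp : (((n / 2 : ℕ) : ℝ) * (1 / ((k : ℝ) + 1)) + (k : ℝ) * (1 / ((k : ℝ) + 1)))
        * (2 * ((k : ℝ) + 1)) = ((n / 2 : ℕ) : ℝ) * 2 + (k : ℝ) * 2 := by
      field_simp
    rw [hexp, hhalf2]
    linarith
  linarith
end
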